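/- arXiv:1403.3278 — 4 statements merged into one kernel-verified Lean document; each statement's English description precedes it below -/
import Mathlib

section
/- Let P₀, P₁ be probability measures on a measurable space, let (𝒳,d) be a metric space, let a₀, a₁ ∈ 𝒳 with d(a₀;a₁) = 2δ, and let â be any measurable estimator based on a sample of size n (a measurable function of X₁,…,Xₙ taking values in 𝒳). Then max_{i∈{0,1}} P_iⁿ( d(â; a_i) ≥ δ ) ≥ (1 - d_H²(P₀;P₁))^{2n} / 4, where d_H is the Hellinger distance between P₀ and P₁. -/
/-!
Le Cam's two-point argument. Since `d(a₀, a₁) = 2δ`, no point is within `δ` of both `a₀` and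
`a₁`, so the events `Eᵢ = {d(â, aᵢ) ≥ δ}` cover the sample space and
`P₀ⁿ(E₀) + P₁ⁿ(E₁) ≥ ∫ min(p₀, p₁)` for the product densities `pᵢ`. By Cauchy–Schwarz,
`(∫ √(p₀ p₁))² ≤ ∫ min(p₀, p₁) · ∫ max(p₀, p₁) ≤ 2 ∫ min(p₀, p₁)`, and the Hellinger affinity
`∫ √(p₀ p₁)` of the product densities is the `n`-th power of `∫ √(f₀ f₁) = 1 - d_H²(P₀;P₁)`.
-/

open MeasureTheory
open scoped ENNReal

theorem compl_setOf_le_dist_subset {X : Type*} [PseudoMetricSpace X] {a₀ a₁ : X} {δ : ℝ}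
    (h : 2 * δ ≤ dist a₀ a₁) : {y | δ ≤ dist y a₀}ᶜ ⊆ {y | δ ≤ dist y a₁} := fun y hy ↦ by
  have := dist_triangle_left a₀ a₁ y
  simp only [Set.mem_compl_iff, Set.mem_ofPred_eq, not_le] at hy ⊢
  linarith

theorem ENNReal.ofReal_sqrt (x : ℝ) :
    ENNReal.ofReal √x = ENNReal.ofReal x ^ (1 / 2 : ℝ) := by
  rcases le_total 0 x with hx | hx
  · rw [Real.sqrt_eq_rpow, ENNReal.ofReal_rpow_of_nonneg hx (by norm_num)]
  · rw [Real.sqrt_eq_zero_of_nonpos hx, ENNReal.ofReal_zero, ENNReal.ofReal_of_nonpos hx,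
      ENNReal.zero_rpow_of_pos (by norm_num)]

namespace MeasureTheory

section HellingerAffinity

variable {α : Type*} [MeasurableSpace α] {ν : Measure α} {g₀ g₁ : α → ℝ≥0∞}

/-- For densities `f₀, f₁` of `P₀, P₁` this is `∫ √(f₀ f₁) = 1 - d_H²(P₀;P₁)`. -/
noncomputable def hellingerAffinity (ν : Measure α) (g₀ g₁ : α → ℝ≥0∞) : ℝ≥0∞ :=
  ∫⁻ x, (g₀ x * g₁ x) ^ (1 / 2 : ℝ) ∂ν

theorem lintegral_min_le_withDensity_add_withDensity {E₀ E₁ : Set α} (hE₀ : MeasurableSet E₀)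
    (hE₁ : MeasurableSet E₁) (hcover : E₀ᶜ ⊆ E₁) :
    ∫⁻ x, min (g₀ x) (g₁ x) ∂ν ≤ ν.withDensity g₀ E₀ + ν.withDensity g₁ E₁ := by
  rw [← lintegral_add_compl _ hE₀, withDensity_apply _ hE₀, withDensity_apply _ hE₁]
  refine add_le_add (setLIntegral_mono' hE₀ fun x _ ↦ min_le_left _ _) ?_
  calc ∫⁻ x in E₀ᶜ, min (g₀ x) (g₁ x) ∂ν ≤ ∫⁻ x in E₁, min (g₀ x) (g₁ x) ∂ν :=
          lintegral_mono_set hcover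
    _ ≤ ∫⁻ x in E₁, g₁ x ∂ν := lintegral_mono fun x ↦ min_le_right _ _

theorem hellingerAffinity_sq_le (hg₀ : AEMeasurable g₀ ν) (hg₁ : AEMeasurable g₁ ν) :
    hellingerAffinity ν g₀ g₁ ^ 2
      ≤ (∫⁻ x, min (g₀ x) (g₁ x) ∂ν) * (∫⁻ x, g₀ x ∂ν + ∫⁻ x, g₁ x ∂ν) := by
  have hCS : hellingerAffinity ν g₀ g₁
      ≤ (∫⁻ x, min (g₀ x) (g₁ x) ∂ν) ^ (1 / 2 : ℝ) * (∫⁻ x, max (g₀ x) (g₁ x) ∂ν) ^ (1 / 2 : ℝ) :=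
    calc hellingerAffinity ν g₀ g₁
        = ∫⁻ x, min (g₀ x) (g₁ x) ^ (1 / 2 : ℝ) * max (g₀ x) (g₁ x) ^ (1 / 2 : ℝ) ∂ν := by
          simp_rw [hellingerAffinity, ← min_mul_max (g₀ _) (g₁ _),
            ENNReal.mul_rpow_of_nonneg _ _ (by norm_num : (0 : ℝ) ≤ 1 / 2)]
      _ ≤ _ := ENNReal.lintegral_mul_norm_pow_le (hg₀.min hg₁) (hg₀.max hg₁) (by norm_num)
          (by norm_num) (by norm_num)
  have hmax : ∫⁻ x, max (g₀ x) (g₁ x) ∂ν ≤ ∫⁻ x, g₀ x ∂ν + ∫⁻ x, g₁ x ∂ν :=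
    (lintegral_mono fun _ ↦ max_le le_self_add le_add_self).trans_eq (lintegral_add_left' hg₀ _)
  have hsq (a : ℝ≥0∞) : (a ^ (1 / 2 : ℝ)) ^ 2 = a := by
    rw [one_div, ← Nat.cast_ofNat, ENNReal.rpow_inv_natCast_pow two_ne_zero]
  calc hellingerAffinity ν g₀ g₁ ^ 2
      ≤ (∫⁻ x, min (g₀ x) (g₁ x) ∂ν) * ∫⁻ x, max (g₀ x) (g₁ x) ∂ν := by
        simpa only [mul_pow, hsq] using pow_le_pow_left₀ zero_le hCS 2
    _ ≤ _ := by gcongr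

theorem ofReal_integral_sqrt_mul_le_hellingerAffinity {f₀ f₁ : α → ℝ} (hf₀ : Measurable f₀)
    (hf₁ : Measurable f₁) (hf₀nn : ∀ x, 0 ≤ f₀ x) :
    ENNReal.ofReal (∫ x, √(f₀ x * f₁ x) ∂ν)
      ≤ hellingerAffinity ν (fun x ↦ ENNReal.ofReal (f₀ x)) (fun x ↦ ENNReal.ofReal (f₁ x)) := by
  rw [integral_eq_lintegral_of_nonneg_ae (f := fun x ↦ √(f₀ x * f₁ x))
    (.of_forall fun _ ↦ Real.sqrt_nonneg _) (hf₀.mul hf₁).sqrt.aestronglyMeasurable]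
  refine ENNReal.ofReal_toReal_le.trans_eq (lintegral_congr fun x ↦ ?_)
  rw [ENNReal.ofReal_sqrt, ENNReal.ofReal_mul (hf₀nn x)]

theorem hellingerAffinity_sq_le_two_mul {P₀ P₁ : Measure α} [IsProbabilityMeasure P₀]
    [IsProbabilityMeasure P₁] (hg₀ : Measurable g₀) (hg₁ : Measurable g₁)
    (hP₀ : P₀ = ν.withDensity g₀) (hP₁ : P₁ = ν.withDensity g₁)
    {E₀ E₁ : Set α} (hE₀ : MeasurableSet E₀) (hE₁ : MeasurableSet E₁) (hcover : E₀ᶜ ⊆ E₁) :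
    hellingerAffinity ν g₀ g₁ ^ 2 ≤ 2 * (P₀ E₀ + P₁ E₁) := by
  have hmass {P : Measure α} [IsProbabilityMeasure P] {g : α → ℝ≥0∞} (hP : P = ν.withDensity g) :
      ∫⁻ x, g x ∂ν = 1 := by
    rw [← setLIntegral_univ, ← withDensity_apply _ .univ, ← hP, measure_univ]
  calc hellingerAffinity ν g₀ g₁ ^ 2
      ≤ (∫⁻ x, min (g₀ x) (g₁ x) ∂ν) * (∫⁻ x, g₀ x ∂ν + ∫⁻ x, g₁ x ∂ν) :=
        hellingerAffinity_sq_le hg₀.aemeasurable hg₁.aemeasurable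
    _ ≤ (P₀ E₀ + P₁ E₁) * 2 := by
        rw [hmass hP₀, hmass hP₁, one_add_one_eq_two, hP₀, hP₁]
        gcongr
        exact lintegral_min_le_withDensity_add_withDensity hE₀ hE₁ hcover
    _ = 2 * (P₀ E₀ + P₁ E₁) := mul_comm _ _

end HellingerAffinity

section Pi

variable {Ω : Type*} [MeasurableSpace Ω] {μ : Measure Ω} [SigmaFinite μ]

theorem lintegral_fin_nat_prod_eq_prod {n : ℕ} {f : Fin n → Ω → ℝ≥0∞} (hf : ∀ i, Measurable (f i)) :
    ∫⁻ x, ∏ i, f i (x i) ∂(Measure.pi fun _ ↦ μ) = ∏ i, ∫⁻ x, f i x ∂μ := by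
  induction n with
  | zero => simp
  | succ n ih =>
    have hprod : Measurable fun y : Fin n → Ω ↦ ∏ i : Fin n, f i.succ (y i) := by fun_prop
    calc
      _ = ∫⁻ y : Ω × (Fin n → Ω), f 0 y.1 * ∏ i : Fin n, f i.succ (y.2 i) ∂μ.prod
            (Measure.pi fun _ ↦ μ) := by
        rw [← (measurePreserving_piFinSuccAbove (fun _ ↦ μ) 0).lintegral_comp_emb
          (MeasurableEquiv.measurableEmbedding _)]
        congr 1 with x
        simp [Fin.prod_univ_succ, MeasurableEquiv.piFinSuccAbove, Fin.tail]
      _ = (∫⁻ x, f 0 x ∂μ) * ∏ i : Fin n, ∫⁻ x, f i.succ x ∂μ := by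
        rw [lintegral_prod_mul (hf 0).aemeasurable hprod.aemeasurable, ih fun i ↦ hf i.succ]
      _ = ∏ i, ∫⁻ x, f i x ∂μ := (Fin.prod_univ_succ fun i ↦ ∫⁻ x, f i x ∂μ).symm

theorem Measure.pi_withDensity {n : ℕ} {f : Fin n → Ω → ℝ≥0∞} (hf : ∀ i, Measurable (f i))
    [∀ i, SigmaFinite (μ.withDensity (f i))] :
    Measure.pi (fun i ↦ μ.withDensity (f i))
      = (Measure.pi fun _ ↦ μ).withDensity fun x ↦ ∏ i, f i (x i) := by
  refine Measure.pi_eq fun s hs ↦ ?_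
  have hind : (Set.univ.pi s).indicator (fun x ↦ ∏ i, f i (x i))
      = fun x ↦ ∏ i, (s i).indicator (f i) (x i) := by
    ext x
    classical simp [Set.indicator, Fintype.prod_ite_zero]
  rw [withDensity_apply _ (.univ_pi hs), ← lintegral_indicator (.univ_pi hs), hind,
    lintegral_fin_nat_prod_eq_prod fun i ↦ (hf i).indicator (hs i)]
  simp_rw [lintegral_indicator (hs _), withDensity_apply _ (hs _)]

theorem hellingerAffinity_pi {n : ℕ} {f₀ f₁ : Ω → ℝ≥0∞} (hf₀ : Measurable f₀)
    (hf₁ : Measurable f₁) :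
    hellingerAffinity (Measure.pi fun _ : Fin n ↦ μ) (fun x ↦ ∏ i, f₀ (x i))
      (fun x ↦ ∏ i, f₁ (x i)) = hellingerAffinity μ f₀ f₁ ^ n := by
  simp_rw [hellingerAffinity, ← Finset.prod_mul_distrib,
    ← ENNReal.prod_rpow_of_nonneg (by norm_num : (0 : ℝ) ≤ 1 / 2)]
  rw [lintegral_fin_nat_prod_eq_prod (f := fun _ y ↦ (f₀ y * f₁ y) ^ (1 / 2 : ℝ))
    fun _ ↦ (hf₀.mul hf₁).pow_const _, Finset.prod_const, Finset.card_univ, Fintype.card_fin]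

end Pi

end MeasureTheory

theorem two_point_minimax_lower_bound_general {Ω : Type*} [MeasurableSpace Ω]
    {X : Type*} [MetricSpace X] [MeasurableSpace X] [BorelSpace X]
    (μ : Measure Ω) [SigmaFinite μ] (f₀ f₁ : Ω → ℝ)
    (hf₀ : Measurable f₀) (hf₁ : Measurable f₁)
    (hf₀nn : ∀ x, 0 ≤ f₀ x)
    (P₀ P₁ : Measure Ω)
    (hP₀ : P₀ = μ.withDensity fun x => ENNReal.ofReal (f₀ x))
    (hP₁ : P₁ = μ.withDensity fun x => ENNReal.ofReal (f₁ x))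
    (hP₀p : IsProbabilityMeasure P₀) (hP₁p : IsProbabilityMeasure P₁)
    (dH2 : ℝ) (hdH2 : dH2 = 1 - ∫ y, Real.sqrt (f₀ y * f₁ y) ∂μ)
    (a₀ a₁ : X) (δ : ℝ) (hδ : dist a₀ a₁ = 2 * δ)
    (n : ℕ) (est : (Fin n → Ω) → X) (hest : Measurable est) :
    max ((Measure.pi fun _ : Fin n => P₀) {x | δ ≤ dist (est x) a₀})
        ((Measure.pi fun _ : Fin n => P₁) {x | δ ≤ dist (est x) a₁})
      ≥ ENNReal.ofReal ((1 - dH2) ^ (2 * n) / 4) := by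
  set E₀ := {x | δ ≤ dist (est x) a₀}
  set E₁ := {x | δ ≤ dist (est x) a₁}
  have hE (a : X) : MeasurableSet {x | δ ≤ dist (est x) a} :=
    hest (isClosed_le continuous_const (continuous_id.dist continuous_const)).measurableSet
  have hcover : E₀ᶜ ⊆ E₁ := fun x hx ↦ compl_setOf_le_dist_subset hδ.ge hx
  have hF₀ : Measurable fun x ↦ ENNReal.ofReal (f₀ x) := hf₀.ennreal_ofReal
  have hF₁ : Measurable fun x ↦ ENNReal.ofReal (f₁ x) := hf₁.ennreal_ofReal
  have hLeCam := hellingerAffinity_sq_le_two_mul (by fun_prop) (by fun_prop)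
    (hP₀ ▸ Measure.pi_withDensity fun _ ↦ hF₀) (hP₁ ▸ Measure.pi_withDensity fun _ ↦ hF₁)
    (hE a₀) (hE a₁) hcover
  rw [hellingerAffinity_pi hF₀ hF₁] at hLeCam
  have hA := ofReal_integral_sqrt_mul_le_hellingerAffinity (ν := μ) hf₀ hf₁ hf₀nn
  have hA₀ : 0 ≤ ∫ y, √(f₀ y * f₁ y) ∂μ := integral_nonneg fun _ ↦ Real.sqrt_nonneg _
  rw [hdH2, sub_sub_cancel, ge_iff_le, ENNReal.ofReal_div_of_pos four_pos,
    ENNReal.ofReal_pow hA₀, ENNReal.ofReal_ofNat]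
  refine ENNReal.div_le_of_le_mul ?_
  calc ENNReal.ofReal (∫ y, √(f₀ y * f₁ y) ∂μ) ^ (2 * n)
      ≤ (hellingerAffinity μ _ _ ^ n) ^ 2 := by rw [← pow_mul, mul_comm]; exact pow_le_pow_left₀ zero_le hA _
    _ ≤ 2 * ((Measure.pi fun _ ↦ P₀) E₀ + (Measure.pi fun _ ↦ P₁) E₁) := hLeCam
    _ ≤ 2 * (2 * max ((Measure.pi fun _ ↦ P₀) E₀) ((Measure.pi fun _ ↦ P₁) E₁)) := by
        rw [two_mul (max _ _)]
        gcongr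
        exacts [le_max_left _ _, le_max_right _ _]
    _ = _ := by ring

/-- Two-point minimax lower bound (Lemma 3.1): if `P₀, P₁` are probability measures with
densities `f₀, f₁` w.r.t. a common dominating measure, `a₀, a₁` are points of a metric space
with `d(a₀;a₁) = 2δ`, and `â` is any measurable estimator based on a sample of size `n`, then
`max_i P_iⁿ(d(â;a_i) ≥ δ) ≥ (1 - d_H²(P₀;P₁))^(2n) / 4`, where
`d_H²(P₀;P₁) = 1 - ∫ √(f₀ f₁)` is the squared Hellinger distance. -/
theorem two_point_minimax_lower_bound {Ω : Type*} [MeasurableSpace Ω]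
    {X : Type*} [MetricSpace X] [MeasurableSpace X] [BorelSpace X]
    (μ : Measure Ω) [SigmaFinite μ] (f₀ f₁ : Ω → ℝ)
    (hf₀ : Measurable f₀) (hf₁ : Measurable f₁)
    (hf₀nn : ∀ x, 0 ≤ f₀ x) (hf₁nn : ∀ x, 0 ≤ f₁ x)
    (P₀ P₁ : Measure Ω)
    (hP₀ : P₀ = μ.withDensity fun x => ENNReal.ofReal (f₀ x))
    (hP₁ : P₁ = μ.withDensity fun x => ENNReal.ofReal (f₁ x))
    (hP₀p : IsProbabilityMeasure P₀) (hP₁p : IsProbabilityMeasure P₁)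
    (dH2 : ℝ) (hdH2 : dH2 = 1 - ∫ y, Real.sqrt (f₀ y * f₁ y) ∂μ)
    (a₀ a₁ : X) (δ : ℝ) (hδ : dist a₀ a₁ = 2 * δ)
    (n : ℕ) (est : (Fin n → Ω) → X) (hest : Measurable est) :
    max ((Measure.pi fun _ : Fin n => P₀) {x | δ ≤ dist (est x) a₀})
        ((Measure.pi fun _ : Fin n => P₁) {x | δ ≤ dist (est x) a₁})
      ≥ ENNReal.ofReal ((1 - dH2) ^ (2 * n) / 4) :=
  two_point_minimax_lower_bound_general μ f₀ f₁ hf₀ hf₁ hf₀nn P₀ P₁ hP₀ hP₁ hP₀p hP₁p dH2 hdH2 a₀ a₁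
    δ hδ n est hest
end

section
/- With α, c, b > 0, h ∈ (0;c), γ = h^{αb}, α₁ = α+γ, c_{F₁} = c^{-α}h^{-γ}, and F₁ as above, sup_{0<y≤c} |1 - c_{F₁}^{-1} y^{-α₁} F₁(y)| y^{-bα₁} = sup_{h<y≤c} (1 - y^{-γ}h^{γ}) y^{-bα₁}, and this supremum is bounded by e^{1/(eα)}/(bα). -/
lemma log_le_div_e {u : ℝ} (hu : 0 < u) : Real.log u ≤ u / Real.exp 1 := by
  have h := Real.log_le_sub_one_of_pos (show 0 < u / Real.exp 1 by positivity)
  rw [Real.log_div hu.ne' (Real.exp_ne_zero 1), Real.log_exp] at h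
  linarith

lemma aux_bound (α b h γ : ℝ) (hα : 0 < α) (hb : 0 < b) (hh : 0 < h)
    (hγ : γ = h ^ (α * b)) : ∀ y : ℝ, h < y →
    (1 - y ^ (-γ) * h ^ γ) * y ^ (-(b * (α + γ))) ≤ Real.exp (1 / (Real.exp 1 * α)) / (b * α) := by
  intro y hy
  have hγ0 : 0 < γ := hγ ▸ Real.rpow_pos_of_pos hh _
  have hy0 : 0 < y := hh.trans hy
  have hα₁ : 0 < α + γ := by linarith
  have hba : 0 < b * (α + γ) := by positivity
  have he : (0:ℝ) < Real.exp 1 := Real.exp_pos 1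
  have hyh : 1 < y / h := (one_lt_div hh).mpr hy
  have hyh0 : 0 < y / h := by linarith
  -- step 1 : 1 - t ≤ γ log (y/h)
  have ht : y ^ (-γ) * h ^ γ = (h / y) ^ γ := by
    rw [Real.div_rpow hh.le hy0.le, Real.rpow_neg hy0.le]; ring
  have ht0 : (0:ℝ) < (h / y) ^ γ := Real.rpow_pos_of_pos (by positivity) γ
  have hlogt : Real.log ((h / y) ^ γ) = -(γ * Real.log (y / h)) := by
    rw [Real.log_rpow (by positivity), show h / y = (y / h)⁻¹ by rw [inv_div], Real.log_inv]
    ring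
  have step1 : 1 - y ^ (-γ) * h ^ γ ≤ γ * Real.log (y / h) := by
    have := Real.log_le_sub_one_of_pos ht0
    rw [ht]; linarith
  -- step 2 : log (y/h) ≤ (y/h)^(bα₁) / (e * (bα₁))
  have step2 : Real.log (y / h) ≤ (y / h) ^ (b * (α + γ)) / (Real.exp 1 * (b * (α + γ))) := by
    have h1 := log_le_div_e (Real.rpow_pos_of_pos hyh0 (b * (α + γ)))
    rw [Real.log_rpow hyh0] at h1
    rw [le_div_iff₀ (by positivity)]
    rw [le_div_iff₀ he] at h1
    nlinarith
  have hyp0 : (0:ℝ) ≤ y ^ (-(b * (α + γ))) := (Real.rpow_pos_of_pos hy0 _).le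
  have key : (1 - y ^ (-γ) * h ^ γ) * y ^ (-(b * (α + γ)))
      ≤ γ * ((y / h) ^ (b * (α + γ)) / (Real.exp 1 * (b * (α + γ)))) * y ^ (-(b * (α + γ))) := by
    apply mul_le_mul_of_nonneg_right _ hyp0
    exact step1.trans (by nlinarith [step2])
  -- simplify RHS
  have hcomb : (y / h) ^ (b * (α + γ)) * y ^ (-(b * (α + γ))) = h ^ (-(b * (α + γ))) := by
    rw [Real.div_rpow hy0.le hh.le, Real.rpow_neg hy0.le, Real.rpow_neg hh.le]
    have h3 : (0:ℝ) < y ^ (b*(α+γ)) := Real.rpow_pos_of_pos hy0 _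
    have h4 : (0:ℝ) < h ^ (b*(α+γ)) := Real.rpow_pos_of_pos hh _
    field_simp
  have hgh : γ * h ^ (-(b * (α + γ))) = h ^ (-(b * γ)) := by
    rw [hγ, ← Real.rpow_add hh]
    congr 1; ring
  -- h^(-(bγ)) ≤ exp (1/(e α))
  have hloggam : Real.log γ = α * b * Real.log h := by rw [hγ, Real.log_rpow hh]
  have hgg : -(γ * Real.log γ) ≤ 1 / Real.exp 1 := by
    have h1 := log_le_div_e (inv_pos.mpr hγ0)
    rw [Real.log_inv] at h1
    have := mul_le_mul_of_nonneg_left h1 hγ0.le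
    rw [div_eq_mul_inv] at this ⊢
    calc -(γ * Real.log γ) = γ * -Real.log γ := by ring
      _ ≤ γ * (γ⁻¹ * (Real.exp 1)⁻¹) := this
      _ = (Real.exp 1)⁻¹ := by field_simp
      _ = 1 * (Real.exp 1)⁻¹ := by ring
  have hhb : h ^ (-(b * γ)) ≤ Real.exp (1 / (Real.exp 1 * α)) := by
    rw [Real.rpow_def_of_pos hh]
    apply Real.exp_le_exp.mpr
    have heq : Real.log h * -(b * γ) = -(γ * Real.log γ) / α := by
      rw [hloggam]; field_simp
    rw [heq, div_le_div_iff₀ hα (by positivity)]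
    calc -(γ * Real.log γ) * (Real.exp 1 * α) = (-(γ * Real.log γ) * Real.exp 1) * α := by ring
      _ ≤ (1 / Real.exp 1 * Real.exp 1) * α := by
          apply mul_le_mul_of_nonneg_right (mul_le_mul_of_nonneg_right hgg he.le) hα.le
      _ = 1 * α := by field_simp
  -- finish
  have hfin : γ * ((y / h) ^ (b * (α + γ)) / (Real.exp 1 * (b * (α + γ)))) * y ^ (-(b * (α + γ)))
      = h ^ (-(b * γ)) / (Real.exp 1 * (b * (α + γ))) := by
    rw [← hgh, ← hcomb]; ring
  refine key.trans ?_
  rw [hfin]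
  apply div_le_div₀ (Real.exp_pos _).le hhb (by positivity)
  nlinarith [Real.add_one_le_exp 1, mul_pos hb hα, mul_pos hb hγ0]

/-- For the disturbed Pareto d.f. `F₁` with tail constant `c_{F₁} = c^(-α)h^(-γ)` and index
`α₁ = α+γ`, the supremum `sup_{0<y≤c} |1 - c_{F₁}⁻¹ y^(-α₁) F₁(y)| y^(-bα₁)` equals
`sup_{h<y≤c} (1 - y^(-γ)h^γ) y^(-bα₁)`, and is bounded by `e^(1/(eα))/(bα)`. -/
theorem disturbed_pareto_sup_bound (α c b h γ : ℝ)
    (hα : 0 < α) (hc : 0 < c) (hb : 0 < b) (hh : 0 < h) (hhc : h < c)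
    (hγ : γ = h ^ (α * b)) (F₁ : ℝ → ℝ)
    (hF₁lo : ∀ y ∈ Set.Ioc (0 : ℝ) h, F₁ y = (h / c) ^ (-γ) * (y / c) ^ (α + γ))
    (hF₁hi : ∀ y ∈ Set.Ioc h c, F₁ y = (y / c) ^ α) :
    sSup ((fun y : ℝ => |1 - (c ^ (-α) * h ^ (-γ))⁻¹ * y ^ (-(α + γ)) * F₁ y|
            * y ^ (-(b * (α + γ)))) '' Set.Ioc 0 c)
        = sSup ((fun y : ℝ => (1 - y ^ (-γ) * h ^ γ) * y ^ (-(b * (α + γ)))) '' Set.Ioc h c)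
      ∧ sSup ((fun y : ℝ => |1 - (c ^ (-α) * h ^ (-γ))⁻¹ * y ^ (-(α + γ)) * F₁ y|
            * y ^ (-(b * (α + γ)))) '' Set.Ioc 0 c)
        ≤ Real.exp (1 / (Real.exp 1 * α)) / (b * α) := by
  set g : ℝ → ℝ := fun y => |1 - (c ^ (-α) * h ^ (-γ))⁻¹ * y ^ (-(α + γ)) * F₁ y|
      * y ^ (-(b * (α + γ))) with hg
  set f : ℝ → ℝ := fun y => (1 - y ^ (-γ) * h ^ γ) * y ^ (-(b * (α + γ))) with hf
  have hγ0 : 0 < γ := hγ ▸ Real.rpow_pos_of_pos hh _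
  -- values on (0, h] are 0
  have hval0 : Set.EqOn g (fun _ => (0:ℝ)) (Set.Ioc 0 h) := by
    intro y hy
    have hy0 : 0 < y := hy.1
    have hone : (c ^ (-α) * h ^ (-γ))⁻¹ * y ^ (-(α + γ)) * ((h / c) ^ (-γ) * (y / c) ^ (α + γ)) = 1 := by
      rw [Real.div_rpow hh.le hc.le, Real.div_rpow hy0.le hc.le,
        Real.rpow_neg hc.le, Real.rpow_neg hh.le, Real.rpow_neg hy0.le,
        Real.rpow_neg hc.le, Real.rpow_add hc, Real.rpow_add hy0]
      have h1 : (0:ℝ) < c ^ α := Real.rpow_pos_of_pos hc α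
      have h2 : (0:ℝ) < h ^ γ := Real.rpow_pos_of_pos hh γ
      have h3 : (0:ℝ) < y ^ α := Real.rpow_pos_of_pos hy0 α
      have h4 : (0:ℝ) < y ^ γ := Real.rpow_pos_of_pos hy0 γ
      have h5 : (0:ℝ) < c ^ γ := Real.rpow_pos_of_pos hc γ
      field_simp
    simp only [hg, hF₁lo y hy, hone, sub_self, abs_zero, zero_mul]
  -- values on (h, c] agree with f
  have hnn : ∀ y : ℝ, h < y → 0 ≤ 1 - y ^ (-γ) * h ^ γ := by
    intro y hy
    have hy0 : 0 < y := hh.trans hy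
    have : y ^ (-γ) * h ^ γ = (h / y) ^ γ := by
      rw [Real.div_rpow hh.le hy0.le, Real.rpow_neg hy0.le]; ring
    rw [this, sub_nonneg]
    exact Real.rpow_le_one (by positivity) (by rw [div_le_one hy0]; exact hy.le) hγ0.le
  have hvalf : Set.EqOn g f (Set.Ioc h c) := by
    intro y hy
    have hy0 : 0 < y := hh.trans hy.1
    have hone : (c ^ (-α) * h ^ (-γ))⁻¹ * y ^ (-(α + γ)) * (y / c) ^ α = y ^ (-γ) * h ^ γ := by
      rw [Real.div_rpow hy0.le hc.le, show -(α+γ) = -α + -γ by ring, Real.rpow_add hy0,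
        Real.rpow_neg hc.le, Real.rpow_neg hh.le, Real.rpow_neg hy0.le, Real.rpow_neg hy0.le]
      have h1 : (0:ℝ) < c ^ α := Real.rpow_pos_of_pos hc α
      have h2 : (0:ℝ) < h ^ γ := Real.rpow_pos_of_pos hh γ
      have h3 : (0:ℝ) < y ^ α := Real.rpow_pos_of_pos hy0 α
      have h4 : (0:ℝ) < y ^ γ := Real.rpow_pos_of_pos hy0 γ
      field_simp
    simp only [hg, hf, hF₁hi y hy, hone, abs_of_nonneg (hnn y hy.1)]
  have hbd := aux_bound α b h γ hα hb hh hγ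
  have hbddf : BddAbove (f '' Set.Ioc h c) := by
    refine ⟨Real.exp (1 / (Real.exp 1 * α)) / (b * α), ?_⟩
    rintro x ⟨y, hy, rfl⟩
    exact hbd y hy.1
  have hne : (f '' Set.Ioc h c).Nonempty :=
    ⟨f c, ⟨c, ⟨hhc, le_refl c⟩, rfl⟩⟩
  have hfc : 0 ≤ f c := by
    have := hnn c hhc
    have : (0:ℝ) ≤ c ^ (-(b * (α + γ))) := (Real.rpow_pos_of_pos hc _).le
    simp only [hf]
    exact mul_nonneg (hnn c hhc) this
  have heq : sSup (g '' Set.Ioc 0 c) = sSup (f '' Set.Ioc h c) := by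
    rw [show Set.Ioc (0:ℝ) c = Set.Ioc 0 h ∪ Set.Ioc h c from
        (Set.Ioc_union_Ioc_eq_Ioc hh.le hhc.le).symm,
      Set.image_union, Set.EqOn.image_eq hval0, Set.EqOn.image_eq hvalf,
      Set.Nonempty.image_const (s := Set.Ioc (0:ℝ) h) ⟨h, hh, le_refl h⟩ 0,
      csSup_union bddAbove_singleton (Set.singleton_nonempty 0) hbddf hne,
      csSup_singleton]
    exact sup_eq_right.mpr (hfc.trans (le_csSup hbddf ⟨c, ⟨hhc, le_refl c⟩, rfl⟩))
  refine ⟨heq, ?_⟩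
  rw [heq]
  exact csSup_le hne (by rintro x ⟨y, hy, rfl⟩; exact hbd y hy.1)
end

section
/- With F₀, F₁ the distribution functions defined by F₀(y) = (y/c)^α on (0;c] and F₁(y) = (h/c)^{-γ}(y/c)^{α+γ} on (0;h], F₁(y) = (y/c)^α on (h;c], where h ∈ (0;c) and γ = h^{αb} with b > 0, the squared Hellinger distance satisfies d_H²(F₀;F₁) ≤ γ^{(1+2b)/b} / (8 α² c^α). -/
open MeasureTheory

set_option maxHeartbeats 1000000 in
/-- The squared Hellinger distance between the Pareto distribution `F₀` (density
`f₀(y) = (α/c)(y/c)^(α-1)` on `(0;c]`) and its disturbed version `F₁` (density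
`f₁(y) = ((α+γ)/c)(h/c)^(-γ)(y/c)^(α+γ-1)` on `(0;h]`, `f₁ = f₀` on `(h;c]`), with
`h ∈ (0;c)` and `γ = h^(αb)`, satisfies `d_H²(F₀;F₁) ≤ γ^((1+2b)/b)/(8α²c^α)`. -/
theorem hellinger_distance_pareto_bound (α c b h γ : ℝ)
    (hα : 0 < α) (hc : 0 < c) (hb : 0 < b) (hh : 0 < h) (hhc : h < c)
    (hγ : γ = h ^ (α * b)) (f₀ f₁ : ℝ → ℝ)
    (hf₀ : ∀ y, f₀ y = if 0 < y ∧ y ≤ c then (α / c) * (y / c) ^ (α - 1) else 0)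
    (hf₁ : ∀ y, f₁ y =
      if 0 < y ∧ y ≤ h then ((α + γ) / c) * (h / c) ^ (-γ) * (y / c) ^ (α + γ - 1)
      else if h < y ∧ y ≤ c then (α / c) * (y / c) ^ (α - 1) else 0) :
    1 - ∫ y, Real.sqrt (f₀ y * f₁ y) ≤ γ ^ ((1 + 2 * b) / b) / (8 * α ^ 2 * c ^ α) := by
  have hγ0 : 0 < γ := by rw [hγ]; exact Real.rpow_pos_of_pos hh _
  obtain ⟨p, hp⟩ : ∃ p : ℝ, p = α + γ / 2 := ⟨_, rfl⟩
  have hp0 : 0 < p := by rw [hp]; positivity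
  obtain ⟨s, hs⟩ : ∃ s : ℝ, s = Real.sqrt (α * (α + γ)) := ⟨_, rfl⟩
  have hs0 : 0 ≤ s := by rw [hs]; exact Real.sqrt_nonneg _
  have hssq : s ^ 2 = α * (α + γ) := by rw [hs]; exact Real.sq_sqrt (by positivity)
  obtain ⟨A, hA⟩ : ∃ A : ℝ, A = s * h ^ (-(γ / 2)) * c ^ (-α) := ⟨_, rfl⟩
  obtain ⟨B, hB⟩ : ∃ B : ℝ, B = α * c ^ (-α) := ⟨_, rfl⟩
  have hA0 : 0 ≤ A := by rw [hA]; positivity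
  have hB0 : 0 ≤ B := by rw [hB]; positivity
  -- pointwise identity
  have key : ∀ y, Real.sqrt (f₀ y * f₁ y) =
      Set.indicator (Set.Ioc 0 h) (fun y => A * y ^ (p - 1)) y
      + Set.indicator (Set.Ioc h c) (fun y => B * y ^ (α - 1)) y := by
    intro y
    by_cases h1 : y ∈ Set.Ioc 0 h
    · obtain ⟨hy0, hyh⟩ := h1
      rw [Set.indicator_of_mem (Set.mem_Ioc.mpr ⟨hy0, hyh⟩) (fun y => A * y ^ (p - 1)),
        Set.indicator_of_notMem (by simp; intro hy; linarith), add_zero]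
      have hsq : f₀ y * f₁ y = (A * y ^ (p - 1)) ^ 2 := by
        rw [hf₀, hf₁, if_pos ⟨hy0, le_trans hyh hhc.le⟩, if_pos ⟨hy0, hyh⟩, hA]
        have e1 : (y ^ (p - 1)) ^ 2 = y ^ (α - 1) * y ^ (α + γ - 1) := by
          rw [← Real.rpow_natCast (y ^ (p - 1)) 2, ← Real.rpow_mul hy0.le,
            ← Real.rpow_add hy0]
          congr 1
          rw [hp]; push_cast; ring
        have e2 : (h ^ (-(γ / 2))) ^ 2 = (h ^ γ)⁻¹ := by
          rw [← Real.rpow_natCast (h ^ (-(γ/2))) 2, ← Real.rpow_mul hh.le,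
            ← Real.rpow_neg hh.le]
          norm_num
        have e3 : (c ^ (-α)) ^ 2 = (c ^ α * c ^ α)⁻¹ := by
          rw [← Real.rpow_natCast (c ^ (-α)) 2, ← Real.rpow_mul hc.le,
            ← Real.rpow_add hc, ← Real.rpow_neg hc.le]
          norm_num; ring_nf
        rw [mul_pow, mul_pow, mul_pow, hssq, e1, e2, e3,
          Real.div_rpow hy0.le hc.le, Real.div_rpow hy0.le hc.le,
          Real.div_rpow hh.le hc.le, Real.rpow_neg hh.le, Real.rpow_neg hc.le]
        have hca : c ^ α = c * c ^ (α - 1) := by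
          nth_rewrite 2 [← Real.rpow_one c]
          rw [← Real.rpow_add hc]; congr 1; ring
        have hsplit : c ^ (α + γ - 1) = c ^ (α - 1) * c ^ γ := by
          rw [← Real.rpow_add hc]; congr 1; ring
        rw [hsplit, hca]
        have n1 : c ^ (α - 1) ≠ 0 := (Real.rpow_pos_of_pos hc _).ne'
        have n2 : c ^ (α + γ - 1) ≠ 0 := (Real.rpow_pos_of_pos hc _).ne'
        have n3 : h ^ γ ≠ 0 := (Real.rpow_pos_of_pos hh _).ne'
        have n4 : c ^ γ ≠ 0 := (Real.rpow_pos_of_pos hc _).ne'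
        field_simp
      rw [hsq, Real.sqrt_sq (mul_nonneg hA0 (Real.rpow_nonneg hy0.le _))]
    · by_cases h2 : y ∈ Set.Ioc h c
      · obtain ⟨hyh, hyc⟩ := h2
        have hy0 : 0 < y := lt_trans hh hyh
        rw [Set.indicator_of_notMem h1, Set.indicator_of_mem (Set.mem_Ioc.mpr ⟨hyh, hyc⟩)
          (fun y => B * y ^ (α - 1)), zero_add]
        have hff : f₀ y = B * y ^ (α - 1) := by
          rw [hf₀, if_pos ⟨hy0, hyc⟩, hB, Real.div_rpow hy0.le hc.le]
          have hcn : c ^ (-α) = (c * c ^ (α - 1))⁻¹ := by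
            nth_rewrite 2 [← Real.rpow_one c]
            rw [← Real.rpow_add hc, ← Real.rpow_neg hc.le]; congr 1; ring
          rw [hcn]
          have n1 : c ^ (α - 1) ≠ 0 := (Real.rpow_pos_of_pos hc _).ne'
          field_simp
        have hf1 : f₁ y = f₀ y := by
          rw [hf₁, hf₀, if_neg (by rintro ⟨_, hy⟩; exact h1 (Set.mem_Ioc.mpr ⟨hy0, hy⟩)),
            if_pos ⟨hyh, hyc⟩, if_pos ⟨hy0, hyc⟩]
        rw [hf1, hff, ← sq, Real.sqrt_sq (mul_nonneg hB0 (Real.rpow_nonneg hy0.le _))]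
      · rw [Set.indicator_of_notMem h1, Set.indicator_of_notMem h2]
        have hf0 : f₀ y * f₁ y = 0 := by
          rw [hf₁]
          rcases Classical.em (0 < y ∧ y ≤ h) with hy | hy
          · exact absurd hy h1
          rcases Classical.em (h < y ∧ y ≤ c) with hy2 | hy2
          · exact absurd hy2 h2
          rw [if_neg hy, if_neg hy2, mul_zero]
        rw [hf0, Real.sqrt_zero, add_zero]
  simp only [key]
  have meas1 : MeasurableSet (Set.Ioc (0:ℝ) h) := measurableSet_Ioc
  have meas2 : MeasurableSet (Set.Ioc h c) := measurableSet_Ioc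
  have int1 : IntegrableOn (fun y : ℝ => A * y ^ (p - 1)) (Set.Ioc 0 h) := by
    rw [← intervalIntegrable_iff_integrableOn_Ioc_of_le hh.le]
    exact (intervalIntegral.intervalIntegrable_rpow' (by linarith)).const_mul A
  have int2 : IntegrableOn (fun y : ℝ => B * y ^ (α - 1)) (Set.Ioc h c) := by
    rw [← intervalIntegrable_iff_integrableOn_Ioc_of_le hhc.le]
    exact (intervalIntegral.intervalIntegrable_rpow' (by linarith)).const_mul B
  rw [integral_add (int1.integrable_indicator meas1) (int2.integrable_indicator meas2),
    integral_indicator meas1, integral_indicator meas2,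
    ← intervalIntegral.integral_of_le hh.le, ← intervalIntegral.integral_of_le hhc.le,
    intervalIntegral.integral_const_mul, intervalIntegral.integral_const_mul,
    integral_rpow (Or.inl (by linarith : (-1:ℝ) < p - 1)),
    integral_rpow (Or.inl (by linarith : (-1:ℝ) < α - 1)),
    show p - 1 + 1 = p by ring, show α - 1 + 1 = α by ring,
    Real.zero_rpow hp0.ne']
  have hXpos : 0 < c ^ α := Real.rpow_pos_of_pos hc α
  have hHpos : 0 < h ^ α := Real.rpow_pos_of_pos hh α
  have h4 : h ^ (-(γ / 2)) * h ^ p = h ^ α := by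
    rw [← Real.rpow_add hh]; congr 1; rw [hp]; ring
  have hAh : A * ((h ^ p - 0) / p) = s * h ^ α * (c ^ α)⁻¹ / p := by
    rw [hA, Real.rpow_neg hc.le, ← h4]; ring
  have hBh : B * ((c ^ α - h ^ α) / α) = 1 - h ^ α * (c ^ α)⁻¹ := by
    rw [hB, Real.rpow_neg hc.le]
    field_simp
  have hγb : γ ^ ((1 + 2 * b) / b) = h ^ α * γ ^ 2 := by
    rw [hγ, ← Real.rpow_natCast (h ^ (α * b)) 2, ← Real.rpow_mul hh.le,
      ← Real.rpow_mul hh.le, ← Real.rpow_add hh]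
    congr 1
    field_simp
    ring
  rw [hAh, hBh, hγb]
  -- the key scalar inequality
  have hαp : α ≤ p := by rw [hp]; linarith
  have hsα : α ≤ s := by nlinarith [hssq, hs0, mul_pos hα hγ0]
  have hd : (p - s) * (p + s) = γ ^ 2 / 4 := by
    have : p ^ 2 - s ^ 2 = γ ^ 2 / 4 := by rw [hssq, hp]; ring
    linear_combination this
  have hsp : s ≤ p := by
    by_contra hlt
    push_neg at hlt
    have hprod : 0 < (s - p) * (s + p) := mul_pos (by linarith) (by linarith)
    nlinarith [hprod, hd, sq_nonneg γ]
  have h5 : 2 * α * (p - s) ≤ γ ^ 2 / 4 := by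
    nlinarith [hd, mul_nonneg (sub_nonneg.2 hsp) (show (0:ℝ) ≤ p + s - 2 * α by linarith)]
  have h6 : 8 * α ^ 2 * (p - s) ≤ α * γ ^ 2 := by
    nlinarith [mul_le_mul_of_nonneg_left h5 hα.le, sq_nonneg α]
  have hkey : 8 * α ^ 2 * (p - s) ≤ γ ^ 2 * p := by
    nlinarith [h6, mul_nonneg (sub_nonneg.2 hαp) (sq_nonneg γ)]
  have lhs_eq : 1 - (s * h ^ α * (c ^ α)⁻¹ / p + (1 - h ^ α * (c ^ α)⁻¹))
      = h ^ α * (c ^ α)⁻¹ * ((p - s) / p) := by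
    field_simp
    ring
  calc 1 - (s * h ^ α * (c ^ α)⁻¹ / p + (1 - h ^ α * (c ^ α)⁻¹))
      = h ^ α * (c ^ α)⁻¹ * ((p - s) / p) := lhs_eq
    _ ≤ h ^ α * (c ^ α)⁻¹ * (γ ^ 2 / (8 * α ^ 2)) := by
        apply mul_le_mul_of_nonneg_left _ (by positivity)
        rw [div_le_div_iff₀ hp0 (by positivity)]
        linarith [hkey]
    _ = h ^ α * γ ^ 2 / (8 * α ^ 2 * c ^ α) := by
        field_simp
end

section
/- Let r = b/(1+2b) with b > 0, and suppose zₙ → ∞ with zₙ = o(n^r). Then ∫₀^{zₙ} (1 - v^{1/r}/(8n))^{2n} dv → 4^r · r · Γ(r) as n → ∞. -/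
open Filter Topology MeasureTheory Set Real

/-! Eventually `zₙ ≤ n ^ r`, so on `(0, zₙ]` we have `v ^ (1/r) ≤ n`, and `1 - x ≤ exp (-x)` bounds
the integrand by `exp (-v ^ (1/r) / 4)`, integrable on `(0, ∞)`. Since
`(1 - t/(8n)) ^ (2n) → exp (-t/4)`, dominated convergence gives the limit
`∫₀^∞ exp (-v ^ (1/r) / 4) dv = 4 ^ r Γ(r + 1) = 4 ^ r r Γ(r)`. -/

theorem tendsto_intervalIntegral_of_dominated_Ioi {ι : Type*} {l : Filter ι}
    [l.IsCountablyGenerated] {F : ι → ℝ → ℝ} {f g : ℝ → ℝ} {a : ℝ} {z : ι → ℝ}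
    (hz : Tendsto z l atTop)
    (hF_meas : ∀ᶠ i in l, AEStronglyMeasurable (F i) (volume.restrict (Ioi a)))
    (h_bound : ∀ᶠ i in l, ∀ v ∈ Ioc a (z i), ‖F i v‖ ≤ g v) (hg : IntegrableOn g (Ioi a))
    (h_lim : ∀ v ∈ Ioi a, Tendsto (F · v) l (𝓝 (f v))) :
    Tendsto (fun i => ∫ v in a..z i, F i v) l (𝓝 (∫ v in Ioi a, f v)) := by
  have h_trunc : Tendsto (fun i => ∫ v in Ioi a, (Ioc a (z i)).indicator (F i) v) l
      (𝓝 (∫ v in Ioi a, f v)) := by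
    refine tendsto_integral_filter_of_dominated_convergence (‖g ·‖) ?_ ?_ hg.norm ?_
    · filter_upwards [hF_meas] with i hi using hi.indicator measurableSet_Ioc
    · filter_upwards [h_bound] with i hi
      refine ae_of_all _ fun v => ?_
      by_cases hv : v ∈ Ioc a (z i)
      · rw [indicator_of_mem hv]
        exact (hi v hv).trans (le_norm_self _)
      · rw [indicator_of_notMem hv, norm_zero]
        exact norm_nonneg _
    · filter_upwards [ae_restrict_mem measurableSet_Ioi] with v hv
      refine (h_lim v hv).congr' ?_
      filter_upwards [hz.eventually_ge_atTop v] with i hi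
      rw [indicator_of_mem (show v ∈ Ioc a (z i) from ⟨hv, hi⟩)]
  refine h_trunc.congr' ?_
  filter_upwards [hz.eventually_ge_atTop a] with i hi
  rw [intervalIntegral.integral_of_le hi, integral_indicator measurableSet_Ioc,
    Measure.restrict_restrict measurableSet_Ioc, inter_eq_left.mpr Ioc_subset_Ioi_self]

theorem tendsto_one_sub_div_mul_pow (t c : ℝ) {k : ℕ} (hk : 0 < k) :
    Tendsto (fun n : ℕ => (1 - t / (c * n)) ^ (k * n)) atTop (𝓝 (exp (-(k / c) * t))) := by
  have hkn : Tendsto (k * ·) atTop atTop := tendsto_id.const_mul_atTop' hk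
  refine ((tendsto_one_add_div_pow_exp _).comp hkn).congr' ?_
  filter_upwards [eventually_gt_atTop 0] with n hn
  simp only [Function.comp_apply, Nat.cast_mul]
  congr 1
  field_simp
  ring

theorem norm_one_sub_div_mul_pow_le_exp {t c : ℝ} {n : ℕ} (hc : 0 < c) (hn : 0 < n)
    (ht : t ≤ c * n) (k : ℕ) : ‖(1 - t / (c * n)) ^ (k * n)‖ ≤ exp (-(k / c) * t) := by
  have hcn : 0 < c * n := by positivity
  have h_nonneg : 0 ≤ 1 - t / (c * n) := sub_nonneg.mpr ((div_le_one hcn).mpr ht)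
  rw [norm_pow, norm_of_nonneg h_nonneg]
  calc (1 - t / (c * n)) ^ (k * n) ≤ exp (-(t / (c * n))) ^ (k * n) := by
        gcongr
        linarith [add_one_le_exp (-(t / (c * n)))]
    _ = exp (-(k / c) * t) := by
        rw [← exp_nat_mul]
        congr 1
        field_simp
        push_cast
        ring

theorem integrableOn_exp_neg_mul_rpow {p b : ℝ} (hp : 0 < p) (hb : 0 < b) :
    IntegrableOn (fun x : ℝ => exp (-b * x ^ p)) (Ioi 0) := by
  simpa using integrableOn_rpow_mul_exp_neg_mul_rpow neg_one_lt_zero hp hb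

theorem integral_exp_neg_mul_rpow_one_div {r b : ℝ} (hr : 0 < r) (hb : 0 < b) :
    ∫ x in Ioi (0 : ℝ), exp (-b * x ^ (1 / r)) = b⁻¹ ^ r * r * Gamma r := by
  rw [integral_exp_neg_mul_rpow (by positivity) hb, one_div_one_div, Gamma_add_one hr.ne',
    neg_div, one_div_one_div, rpow_neg hb.le, inv_rpow hb.le, mul_assoc]

/-- With `r = b/(1+2b)`, `zₙ → ∞` and `zₙ = o(n^r)`, the integrals
`∫₀^{zₙ} (1 - v^(1/r)/(8n))^(2n) dv` converge to `4^r · r · Γ(r)`. -/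
theorem integral_tendsto_gamma (b : ℝ) (hb : 0 < b) (r : ℝ) (hr : r = b / (1 + 2 * b))
    (z : ℕ → ℝ) (hz : Tendsto z atTop atTop)
    (hzo : Tendsto (fun n : ℕ => z n / (n : ℝ) ^ r) atTop (nhds 0)) :
    Tendsto (fun n : ℕ => ∫ v in (0 : ℝ)..(z n), (1 - v ^ (1 / r) / (8 * n)) ^ (2 * n))
      atTop (nhds (4 ^ r * r * Real.Gamma r)) := by
  have hr0 : 0 < r := hr ▸ by positivity
  have h_limit_integral : ∫ v in Ioi 0, exp (-((2 : ℕ) / 8) * v ^ (1 / r)) =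
      4 ^ r * r * Gamma r := by
    rw [integral_exp_neg_mul_rpow_one_div hr0 (by norm_num)]
    norm_num
  rw [← h_limit_integral]
  have hz_le : ∀ᶠ n : ℕ in atTop, z n ≤ (n : ℝ) ^ r := by
    filter_upwards [hzo.eventually_lt_const one_pos, eventually_gt_atTop 0] with n hn hn0
    exact ((div_lt_one (by positivity)).mp hn).le
  refine tendsto_intervalIntegral_of_dominated_Ioi hz
    (Eventually.of_forall fun n => Measurable.aestronglyMeasurable (by fun_prop)) ?_
    (integrableOn_exp_neg_mul_rpow (one_div_pos.mpr hr0) (by norm_num : (0 : ℝ) < (2 : ℕ) / 8))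
    fun v _ => tendsto_one_sub_div_mul_pow _ _ two_pos
  filter_upwards [hz_le, eventually_gt_atTop 0] with n hzn hn v hv
  have hv_pow : v ^ (1 / r) ≤ n := by
    rw [one_div, rpow_inv_le_iff_of_pos hv.1.le n.cast_nonneg hr0]
    exact hv.2.trans hzn
  exact norm_one_sub_div_mul_pow_le_exp (by norm_num) hn (by linarith) 2
end
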